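/- arXiv:2006.03142 — 4 statements merged into one kernel-verified Lean document; each statement's English description precedes it below -/
import Mathlib

section
/- Let x be a decision node with remaining supply t > 1 and let i be a buyer. Then the duopsony factors at the two successor nodes satisfy f_i(x + e_i) = max{f_i(x) − 1, 0} and f_i(x + e_{−i}) = min{f_i(x), t − 1}. -/
open Finset

noncomputable section

/-- The opponent of buyer `i`. -/
def other (i : Fin 2) : Fin 2 := 1 - i

/-- The standard unit vector of buyer `i`: winning one item moves `x` to `x + e i`. -/
def e (i : Fin 2) : Fin 2 → ℕ := Pi.single i 1

/-- Remaining supply `t(x) = T - x₁ - x₂` at node `x`. -/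
def supply (T : ℕ) (x : Fin 2 → ℕ) : ℕ := T - (x 0 + x 1)

/-- `x` is a decision node: `x₁ + x₂ < T`. -/
def IsDecision (T : ℕ) (x : Fin 2 → ℕ) : Prop := x 0 + x 1 < T

/-- Incremental value `v_i(k|x) = v_i(x_i + k)`. -/
def val (v : Fin 2 → ℕ → ℝ) (i : Fin 2) (k : ℕ) (x : Fin 2 → ℕ) : ℝ := v i (x i + k)

/-- Valuations are nonnegative and weakly decreasing. -/
def Admissible (v : Fin 2 → ℕ → ℝ) : Prop := ∀ i k, 0 ≤ v i k ∧ v i (k + 1) ≤ v i k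

/-- Greedy payoff `μ̄_i(k|x) = Σ_{j=1}^k v_i(j|x) - k · v_{-i}(t-k+1|x)`. -/
def gbar (T : ℕ) (v : Fin 2 → ℕ → ℝ) (i : Fin 2) (k : ℕ) (x : Fin 2 → ℕ) : ℝ :=
  (∑ j ∈ Finset.Icc 1 k, val v i j x) - (k : ℝ) * val v (other i) (supply T x - k + 1) x

/-- Greedy utility `μ_i(x) = max_{0 ≤ k ≤ t} μ̄_i(k|x)` (equal to `0` at terminal nodes). -/
def gu (T : ℕ) (v : Fin 2 → ℕ → ℝ) (i : Fin 2) (x : Fin 2 → ℕ) : ℝ :=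
  Finset.sup' (Finset.range (supply T x + 1)) Finset.nonempty_range_add_one
    (fun k => gbar T v i k x)

/-- Greedy demand `κ_i(x)`: the least `k ∈ {0,…,t}` attaining the greedy utility. -/
def gd (T : ℕ) (v : Fin 2 → ℕ → ℝ) (i : Fin 2) (x : Fin 2 → ℕ) : ℕ :=
  sInf {k | k ≤ supply T x ∧ gbar T v i k x = gu T v i x}

/-- Duopsony factor `f_i(x) = max ({k ∈ {1,…,t} : v_i(k|x) > v_{-i}(t-k+1|x)} ∪ {0})`. -/
def df (T : ℕ) (v : Fin 2 → ℕ → ℝ) (i : Fin 2) (x : Fin 2 → ℕ) : ℕ :=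
  sSup {k | 1 ≤ k ∧ k ≤ supply T x ∧
    val v (other i) (supply T x - k + 1) x < val v i k x}

/-- Baseline price `β_i(x)`. -/
def base (T : ℕ) (v : Fin 2 → ℕ → ℝ) (i : Fin 2) (x : Fin 2 → ℕ) : ℝ :=
  if df T v i x = 0 then val v i 1 x
  else val v (other i) (supply T x - gd T v i x + 1) x

/-- Threshold price `p_i(x) = v_i(1|x) + μ_i(x+e_i) - μ_i(x+e_{-i})`. -/
def tp (T : ℕ) (v : Fin 2 → ℕ → ℝ) (i : Fin 2) (x : Fin 2 → ℕ) : ℝ :=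
  val v i 1 x + gu T v i (x + e i) - gu T v i (x + e (other i))

/-!
Since values decrease, the comparisons `v_{-i}(t-k+1|x) < v_i(k|x)` that hold form an initial
segment `{1,…,f_i(x)}` of `{1,…,t}`. Both successors have supply `t - 1`. When buyer `i` wins,
its own value sequence shifts by one, so the `k`-th comparison at `x + e_i` is the `(k+1)`-th
at `x`; when the opponent wins, the opponent's sequence shifts instead, so the `k`-th comparison
is the `k`-th at `x`, now only for `k ≤ t - 1`.
-/

def crossIndex (t : ℕ) (a b : ℕ → ℝ) : ℕ :=
  sSup {k | 1 ≤ k ∧ k ≤ t ∧ b (t - k + 1) < a k}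

lemma Nat.sSup_Icc_one (m : ℕ) : sSup (Set.Icc 1 m) = m := by
  rcases Nat.eq_zero_or_pos m with rfl | hm
  · simp
  · exact csSup_Icc hm

section crossIndex

variable {a b : ℕ → ℝ}

lemma setOf_crossIndex_eq_Icc (ha : Antitone a) (hb : Antitone b) (t : ℕ) :
    {k | 1 ≤ k ∧ k ≤ t ∧ b (t - k + 1) < a k} = Set.Icc 1 (crossIndex t a b) := by
  set S := {k | 1 ≤ k ∧ k ≤ t ∧ b (t - k + 1) < a k}
  have hbdd : BddAbove S := ⟨t, fun k hk => hk.2.1⟩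
  ext k
  refine ⟨fun hk => ⟨hk.1, le_csSup hbdd hk⟩, fun ⟨hk1, hkm⟩ => ?_⟩
  have hne : S.Nonempty := by
    by_contra hS
    rw [Set.not_nonempty_iff_eq_empty] at hS
    simp [crossIndex, S, hS] at hkm
    omega
  obtain ⟨-, hmt, hwin⟩ : crossIndex t a b ∈ S := Nat.sSup_mem hne hbdd
  refine ⟨hk1, hkm.trans hmt, ?_⟩
  calc b (t - k + 1) ≤ b (t - crossIndex t a b + 1) := hb (by omega)
    _ < a (crossIndex t a b) := hwin
    _ ≤ a k := ha hkm

lemma crossIndex_eq_of_setOf_eq_Icc {t m : ℕ}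
    (h : {k | 1 ≤ k ∧ k ≤ t ∧ b (t - k + 1) < a k} = Set.Icc 1 m) :
    crossIndex t a b = m := by
  rw [crossIndex, h, Nat.sSup_Icc_one]

lemma crossIndex_pred_shift_left (ha : Antitone a) (hb : Antitone b) (t : ℕ) :
    crossIndex (t - 1) (fun k => a (k + 1)) b = crossIndex t a b - 1 := by
  apply crossIndex_eq_of_setOf_eq_Icc
  ext k
  have hk := Set.ext_iff.1 (setOf_crossIndex_eq_Icc ha hb t) (k + 1)
  simp only [Set.mem_ofPred_eq, Set.mem_Icc] at hk ⊢
  rw [show t - 1 - k = t - (k + 1) by omega]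
  constructor
  · rintro ⟨hk1, hkt, hwin⟩
    exact ⟨hk1, by have := (hk.1 ⟨by omega, by omega, hwin⟩).2; omega⟩
  · rintro ⟨hk1, hkm⟩
    obtain ⟨-, hkt, hwin⟩ := hk.2 ⟨by omega, by omega⟩
    exact ⟨hk1, by omega, hwin⟩

lemma crossIndex_pred_shift_right (ha : Antitone a) (hb : Antitone b) (t : ℕ) :
    crossIndex (t - 1) a (fun m => b (m + 1)) = min (crossIndex t a b) (t - 1) := by
  apply crossIndex_eq_of_setOf_eq_Icc
  ext k
  have hk := Set.ext_iff.1 (setOf_crossIndex_eq_Icc ha hb t) k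
  simp only [Set.mem_ofPred_eq, Set.mem_Icc, le_min_iff] at hk ⊢
  constructor
  · rintro ⟨hk1, hkt, hwin⟩
    rw [show t - 1 - k + 1 + 1 = t - k + 1 by omega] at hwin
    exact ⟨hk1, (hk.1 ⟨hk1, by omega, hwin⟩).2, hkt⟩
  · rintro ⟨hk1, hkm, hkt⟩
    obtain ⟨-, -, hwin⟩ := hk.2 ⟨hk1, hkm⟩
    rw [show t - 1 - k + 1 + 1 = t - k + 1 by omega]
    exact ⟨hk1, hkt, hwin⟩

end crossIndex

lemma other_ne (i : Fin 2) : other i ≠ i := by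
  fin_cases i <;> decide

lemma supply_add_e (T : ℕ) (x : Fin 2 → ℕ) (i : Fin 2) :
    supply T (x + e i) = supply T x - 1 := by
  have he : e i 0 + e i 1 = 1 := by fin_cases i <;> simp [e]
  simp only [supply, Pi.add_apply]
  omega

lemma val_add_e_self (v : Fin 2 → ℕ → ℝ) (i : Fin 2) (k : ℕ) (x : Fin 2 → ℕ) :
    val v i k (x + e i) = val v i (k + 1) x := by
  simp only [_root_.val, Pi.add_apply, e, Pi.single_eq_same]
  ring_nf

lemma val_add_e_of_ne (v : Fin 2 → ℕ → ℝ) {i j : Fin 2} (h : j ≠ i) (k : ℕ)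
    (x : Fin 2 → ℕ) : val v j k (x + e i) = val v j k x := by
  simp only [_root_.val, Pi.add_apply, e, Pi.single_eq_of_ne h, add_zero]

lemma df_eq_crossIndex (T : ℕ) (v : Fin 2 → ℕ → ℝ) (i : Fin 2) (x : Fin 2 → ℕ) :
    df T v i x = crossIndex (supply T x) (val v i · x) (val v (other i) · x) := rfl

lemma Admissible.antitone_val {v : Fin 2 → ℕ → ℝ} (hv : Admissible v) (i : Fin 2)
    (x : Fin 2 → ℕ) : Antitone (val v i · x) :=
  fun _ _ hkl => antitone_nat_of_succ_le (fun n => (hv i n).2) (Nat.add_le_add_left hkl _)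

theorem stmt0_general (T : ℕ) (v : Fin 2 → ℕ → ℝ) (hv : Admissible v)
    (x : Fin 2 → ℕ) (i : Fin 2) :
    df T v i (x + e i) = df T v i x - 1 ∧
    df T v i (x + e (other i)) = min (df T v i x) (supply T x - 1) := by
  have hown := hv.antitone_val i x
  have hopp := hv.antitone_val (other i) x
  simp only [df_eq_crossIndex, supply_add_e, val_add_e_self,
    val_add_e_of_ne v (other_ne i), val_add_e_of_ne v (other_ne i).symm]
  exact ⟨crossIndex_pred_shift_left hown hopp _, crossIndex_pred_shift_right hown hopp _⟩

/-- Evolution of the duopsony factor at the two successor nodes. -/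
theorem stmt0 (T : ℕ) (v : Fin 2 → ℕ → ℝ) (hv : Admissible v)
    (x : Fin 2 → ℕ) (hx : IsDecision T x) (ht : 1 < supply T x) (i : Fin 2) :
    df T v i (x + e i) = df T v i x - 1 ∧
    df T v i (x + e (other i)) = min (df T v i x) (supply T x - 1) :=
  stmt0_general T v hv x i
end
end

section
/- In the no-overbidding equilibrium with any tie-breaking rule, for every decision node x and every buyer i, the price paid at x satisfies p(x) ≤ v_i(1|x) + u_i(x + e_i) − u_i(x). -/
open Finset

noncomputable section

/-- A tie-breaking rule: probabilities assigned to the two buyers at each decision node. -/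
def TieBreaking (T : ℕ) (π : Fin 2 → (Fin 2 → ℕ) → ℝ) : Prop :=
  ∀ x : Fin 2 → ℕ, IsDecision T x →
    (∀ i, 0 ≤ π i x ∧ π i x ≤ 1) ∧ π 0 x + π 1 x = 1

/-- The no-overbidding equilibrium for the tie-breaking rule `π`, described by its
forward utilities `u`, bids `b` and winning probabilities `q`, which satisfy the
defining backward recursion. -/
structure Equilibrium (T : ℕ) (v : Fin 2 → ℕ → ℝ) (π : Fin 2 → (Fin 2 → ℕ) → ℝ) where
  u : Fin 2 → (Fin 2 → ℕ) → ℝ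
  b : Fin 2 → (Fin 2 → ℕ) → ℝ
  q : Fin 2 → (Fin 2 → ℕ) → ℝ
  u_terminal : ∀ i x, ¬ IsDecision T x → u i x = 0
  bid_def : ∀ i x, IsDecision T x →
    b i x = min (val v i 1 x) (val v i 1 x + u i (x + e i) - u i (x + e (other i)))
  q_win : ∀ i x, IsDecision T x → b (other i) x < b i x → q i x = 1
  q_lose : ∀ i x, IsDecision T x → b i x < b (other i) x → q i x = 0
  q_tie : ∀ i x, IsDecision T x → b i x = b (other i) x → q i x = π i x
  u_def : ∀ i x, IsDecision T x →
    u i x = q i x * (val v i 1 x - b (other i) x + u i (x + e i))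
            + (1 - q i x) * u i (x + e (other i))

/-- The price paid at node `x`: the lower of the two bids. -/
def price {T : ℕ} {v : Fin 2 → ℕ → ℝ} {π : Fin 2 → (Fin 2 → ℕ) → ℝ}
    (E : Equilibrium T v π) (x : Fin 2 → ℕ) : ℝ := min (E.b 0 x) (E.b 1 x)

/-!
The utility `u_i(x)` is a lottery between winning at `x`, worth
`v_i(1|x) + u_i(x+e_i) - b_{-i}(x)`, and losing at `x`, worth `u_i(x+e_{-i})`.
Both outcomes are at most `v_i(1|x) + u_i(x+e_i) - p(x)`: the first because
`p(x) ≤ b_{-i}(x)`, the second because `p(x) ≤ b_i(x)` and the bid `b_i(x)` never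
exceeds buyer `i`'s indifference price `v_i(1|x) + u_i(x+e_i) - u_i(x+e_{-i})`.
-/

namespace Equilibrium

variable {T : ℕ} {v : Fin 2 → ℕ → ℝ} {π : Fin 2 → (Fin 2 → ℕ) → ℝ}
  (E : Equilibrium T v π) (x : Fin 2 → ℕ)

theorem price_le_bid (j : Fin 2) : price E x ≤ E.b j x := by
  fin_cases j
  · exact min_le_left _ _
  · exact min_le_right _ _

theorem bid_le_indifference (hx : IsDecision T x) (i : Fin 2) :
    E.b i x ≤ val v i 1 x + E.u i (x + e i) - E.u i (x + e (other i)) := by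
  rw [E.bid_def i x hx]
  exact min_le_right _ _

theorem q_mem_Icc (hπ : TieBreaking T π) (hx : IsDecision T x) (i : Fin 2) :
    E.q i x ∈ Set.Icc 0 1 := by
  rcases lt_trichotomy (E.b i x) (E.b (other i) x) with h | h | h
  · simp [E.q_lose i x hx h]
  · rw [E.q_tie i x hx h]
    exact (hπ x hx).1 i
  · simp [E.q_win i x hx h]

end Equilibrium

theorem stmt10_general (T : ℕ) (v : Fin 2 → ℕ → ℝ) (π : Fin 2 → (Fin 2 → ℕ) → ℝ)
    (hπ : TieBreaking T π) (E : Equilibrium T v π)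
    (x : Fin 2 → ℕ) (hx : IsDecision T x) (i : Fin 2) :
    price E x ≤ val v i 1 x + E.u i (x + e i) - E.u i x := by
  obtain ⟨hq0, hq1⟩ := E.q_mem_Icc x hπ hx i
  have win_le : val v i 1 x - E.b (other i) x + E.u i (x + e i)
      ≤ val v i 1 x + E.u i (x + e i) - price E x := by
    linarith [E.price_le_bid x (other i)]
  have lose_le : E.u i (x + e (other i)) ≤ val v i 1 x + E.u i (x + e i) - price E x := by
    linarith [E.price_le_bid x i, E.bid_le_indifference x hx i]
  have lottery_le : E.u i x ≤ val v i 1 x + E.u i (x + e i) - price E x := by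
    rw [E.u_def i x hx]
    exact (Convex.combo_le_max _ _ hq0 (sub_nonneg.2 hq1) (add_sub_cancel _ _)).trans
      (max_le win_le lose_le)
  linarith

/-- Bound on the price paid at a decision node in the no-overbidding equilibrium. -/
theorem stmt10 (T : ℕ) (v : Fin 2 → ℕ → ℝ) (π : Fin 2 → (Fin 2 → ℕ) → ℝ)
    (hv : Admissible v) (hπ : TieBreaking T π) (E : Equilibrium T v π)
    (x : Fin 2 → ℕ) (hx : IsDecision T x) (i : Fin 2) :
    price E x ≤ val v i 1 x + E.u i (x + e i) - E.u i x :=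
  stmt10_general T v π hπ E x hx i
end
end

section
/- Characterisation of optimal allocations: for every decision node x and every integer k ∈ {0,…,t}, the allocation giving k of the t remaining items to buyer 1 is welfare-optimal, SW(k|x) = OPT(x), if and only if f_1(x) ≤ k ≤ t − f_2(x). In particular, f_1(x) ≤ t − f_2(x). -/
open Finset

noncomputable section

/-- Social welfare of awarding `k` of the `t` remaining items to buyer 1. -/
def sw (T : ℕ) (v : Fin 2 → ℕ → ℝ) (k : ℕ) (x : Fin 2 → ℕ) : ℝ :=
  (∑ i ∈ Finset.Icc 1 k, val v 0 i x) + (∑ i ∈ Finset.Icc 1 (supply T x - k), val v 1 i x)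

/-- Optimal social welfare `OPT(x) = max_{0 ≤ k ≤ t} SW(k|x)`. -/
def opt (T : ℕ) (v : Fin 2 → ℕ → ℝ) (x : Fin 2 → ℕ) : ℝ :=
  Finset.sup' (Finset.range (supply T x + 1)) Finset.nonempty_range_add_one
    (fun k => sw T v k x)

/-!
Moving one item from buyer 2 to buyer 1 changes the welfare by
`SW(k+1|x) - SW(k|x) = v₁(k+1|x) - v₂(t-k|x)`, which is weakly decreasing in `k` because both
valuations are. So `k ↦ SW(k|x)` is concave on `{0, …, t}` and is maximal exactly where its
increments change sign: the increment before `k` is nonnegative and the one after it nonpositive.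
By monotonicity again, `f₁(x)` counts the positive increments and `t - f₂(x)` the nonnegative ones.
-/

section Increments

variable {s d : ℕ → ℝ} {t : ℕ}

lemma eq_add_sum_Ico_of_increments (hs : ∀ i < t, s (i + 1) = s i + d i) {j k : ℕ}
    (hjk : j ≤ k) (hkt : k ≤ t) : s k = s j + ∑ i ∈ Ico j k, d i := by
  induction k, hjk using Nat.le_induction with
  | base => simp
  | succ k hjk ih =>
    rw [hs k (by omega), ih (by omega), Finset.sum_Ico_succ_top hjk, add_assoc]

theorem isMaxOn_Iic_iff_of_antitone_increments (hd : Antitone d)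
    (hs : ∀ i < t, s (i + 1) = s i + d i) {k : ℕ} (hk : k ≤ t) :
    IsMaxOn s (Set.Iic t) k ↔ (k < t → d k ≤ 0) ∧ (0 < k → 0 ≤ d (k - 1)) := by
  simp only [isMaxOn_iff, Set.mem_Iic]
  constructor
  · intro hmax
    refine ⟨fun hkt => ?_, fun hk0 => ?_⟩
    · linarith [hmax (k + 1) hkt, hs k hkt]
    · have hstep := hs (k - 1) (by omega)
      rw [Nat.sub_add_cancel hk0] at hstep
      linarith [hmax (k - 1) (by omega)]
  · rintro ⟨hright, hleft⟩ j hj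
    rcases le_or_gt j k with hjk | hkj
    · rw [eq_add_sum_Ico_of_increments hs hjk hk, le_add_iff_nonneg_right]
      refine Finset.sum_nonneg fun i hi => ?_
      have hi := Finset.mem_Ico.1 hi
      exact (hleft (by omega)).trans (hd (by omega))
    · rw [eq_add_sum_Ico_of_increments hs hkj.le hj, add_le_iff_nonpos_right]
      refine Finset.sum_nonpos fun i hi => ?_
      exact (hd (Finset.mem_Ico.1 hi).1).trans (hright (by omega))

theorem csSup_setOf_pos_le_iff (hd : Antitone d) {k : ℕ} :
    sSup {m | 1 ≤ m ∧ m ≤ t ∧ 0 < d (m - 1)} ≤ k ↔ (k < t → d k ≤ 0) := by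
  rw [csSup_le_iff' ⟨t, fun m hm => hm.2.1⟩]
  constructor
  · intro h hkt
    by_contra! hpos
    have := h (k + 1) ⟨by omega, hkt, by simpa using hpos⟩
    omega
  · rintro h m ⟨hm1, hmt, hpos⟩
    by_contra! hkm
    exact (hpos.trans_le (hd (by omega : k ≤ m - 1))).not_ge (h (by omega))

end Increments

lemma Admissible.antitone {v : Fin 2 → ℕ → ℝ} (hv : Admissible v) (i : Fin 2) :
    Antitone (v i) :=
  antitone_nat_of_succ_le fun k => (hv i k).2

section Welfare

variable (T : ℕ) (v : Fin 2 → ℕ → ℝ) (x : Fin 2 → ℕ)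

def swGain (k : ℕ) : ℝ := val v 0 (k + 1) x - val v 1 (supply T x - k) x

variable {T v x}

lemma swGain_antitone (hv : Admissible v) : Antitone (swGain T v x) := fun j k hjk => by
  have h0 := hv.antitone 0 (by omega : x 0 + (j + 1) ≤ x 0 + (k + 1))
  have h1 := hv.antitone 1 (by omega : x 1 + (supply T x - k) ≤ x 1 + (supply T x - j))
  simp only [swGain, _root_.val]
  linarith

lemma sw_succ {k : ℕ} (hk : k < supply T x) :
    sw T v (k + 1) x = sw T v k x + swGain T v x k := by
  obtain ⟨r, hr⟩ : ∃ r, supply T x - k = r + 1 := ⟨supply T x - k - 1, by omega⟩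
  rw [sw, sw, swGain, hr, show supply T x - (k + 1) = r by omega,
    Finset.sum_Icc_succ_top (by omega), Finset.sum_Icc_succ_top (by omega)]
  ring

lemma sw_eq_opt_iff {k : ℕ} (hk : k ≤ supply T x) :
    sw T v k x = opt T v x ↔ IsMaxOn (sw T v · x) (Set.Iic (supply T x)) k := by
  simp only [isMaxOn_iff, Set.mem_Iic, opt]
  constructor
  · intro h j hj
    exact h ▸ Finset.le_sup' (sw T v · x) (Finset.mem_range.2 (by omega))
  · intro h
    refine le_antisymm (Finset.le_sup' (sw T v · x) (Finset.mem_range.2 (by omega))) ?_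
    exact Finset.sup'_le _ _ fun j hj => h j (by simpa [Nat.lt_succ_iff] using hj)

lemma df_zero_eq :
    df T v 0 x = sSup {m | 1 ≤ m ∧ m ≤ supply T x ∧ 0 < swGain T v x (m - 1)} := by
  rw [df]
  congr 1; ext m
  refine and_congr_right fun hm1 => and_congr_right fun hmt => ?_
  rw [swGain, Nat.sub_add_cancel hm1, show supply T x - (m - 1) = supply T x - m + 1 by omega,
    sub_pos]
  rfl

-- Stated through the reflected gains `j ↦ -swGain (t - 1 - j)`, which are again antitone, so that
-- `csSup_setOf_pos_le_iff` applies to `f₂` as well.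
lemma df_one_eq : df T v 1 x = sSup {m | 1 ≤ m ∧ m ≤ supply T x ∧
    0 < -swGain T v x (supply T x - 1 - (m - 1))} := by
  rw [df]
  congr 1; ext m
  refine and_congr_right fun hm1 => and_congr_right fun hmt => ?_
  rw [swGain, show supply T x - 1 - (m - 1) + 1 = supply T x - m + 1 by omega,
    show supply T x - (supply T x - 1 - (m - 1)) = m by omega, neg_pos, sub_neg]
  rfl

lemma df_zero_le_iff (hv : Admissible v) {k : ℕ} :
    df T v 0 x ≤ k ↔ (k < supply T x → swGain T v x k ≤ 0) := by
  rw [df_zero_eq, csSup_setOf_pos_le_iff (swGain_antitone hv)]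

lemma le_supply_sub_df_one_iff (hv : Admissible v) {k : ℕ} (hk : k ≤ supply T x) :
    k ≤ supply T x - df T v 1 x ↔ (0 < k → 0 ≤ swGain T v x (k - 1)) := by
  have hrefl : Antitone fun j => -swGain T v x (supply T x - 1 - j) :=
    fun i j hij => neg_le_neg (swGain_antitone hv (by omega))
  have hdf_le : df T v 1 x ≤ supply T x := by
    rw [df_one_eq]; exact csSup_le' fun m hm => hm.2.1
  rw [show k ≤ supply T x - df T v 1 x ↔ df T v 1 x ≤ supply T x - k by omega, df_one_eq,
    csSup_setOf_pos_le_iff hrefl, show supply T x - 1 - (supply T x - k) = k - 1 by omega,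
    neg_nonpos]
  exact imp_congr_left (by omega)

end Welfare

theorem stmt13_general (T : ℕ) (v : Fin 2 → ℕ → ℝ) (hv : Admissible v)
    (x : Fin 2 → ℕ) :
    (∀ k, k ≤ supply T x →
      (sw T v k x = opt T v x ↔
        df T v 0 x ≤ k ∧ k ≤ supply T x - df T v 1 x)) ∧
    df T v 0 x ≤ supply T x - df T v 1 x := by
  have hchar : ∀ k, k ≤ supply T x →
      (sw T v k x = opt T v x ↔ df T v 0 x ≤ k ∧ k ≤ supply T x - df T v 1 x) := by
    intro k hk
    rw [sw_eq_opt_iff hk, isMaxOn_Iic_iff_of_antitone_increments (swGain_antitone hv)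
      (fun i hi => sw_succ hi) hk, df_zero_le_iff hv, le_supply_sub_df_one_iff hv hk]
  refine ⟨hchar, ?_⟩
  obtain ⟨k, hkmem, hkopt⟩ :=
    Finset.exists_mem_eq_sup' Finset.nonempty_range_add_one (sw T v · x)
  have hk : k ≤ supply T x := Nat.lt_succ_iff.1 (Finset.mem_range.1 hkmem)
  obtain ⟨h0, h1⟩ := (hchar k hk).1 hkopt.symm
  exact h0.trans h1

/-- Characterisation of welfare-optimal allocations via the duopsony factors. -/
theorem stmt13 (T : ℕ) (v : Fin 2 → ℕ → ℝ) (hv : Admissible v)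
    (x : Fin 2 → ℕ) (hx : IsDecision T x) :
    (∀ k, k ≤ supply T x →
      (sw T v k x = opt T v x ↔
        df T v 0 x ≤ k ∧ k ≤ supply T x - df T v 1 x)) ∧
    df T v 0 x ≤ supply T x - df T v 1 x :=
  stmt13_general T v hv x
end
end

section
/- Tightness of the price of anarchy bound: for each integer T ≥ 1 define v_1^T(i) = 1 and v_2^T(i) = max{ (⌊T(1−1/e)⌋ − i + 1)/(T − i + 1), 0 } for i ∈ {1,…,T}. Then v_1^T and v_2^T are nonnegative and weakly decreasing, buyer 1 is a strict monopsonist at the initial node (f_1(0) = T), her greedy demand there is κ_1(0) = T − ⌊T(1−1/e)⌋, OPT(0) = T, and the efficiency of the allocation awarding buyer 1 exactly κ_1(0) items tends to 1 − 1/e, i.e. lim_{T→∞} SW(κ_1(0) | 0)/T = 1 − 1/e. -/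
open Finset

noncomputable section

/-- The valuation profile witnessing tightness of the `1 - 1/e` bound:
`v₁(i) = 1` and `v₂(i) = max{(⌊T(1-1/e)⌋ - i + 1)/(T - i + 1), 0}`. -/
def vT (T : ℕ) : Fin 2 → ℕ → ℝ := fun i k =>
  if i = 0 then 1
  else max (((⌊(T : ℝ) * (1 - 1 / Real.exp 1)⌋₊ : ℝ) - (k : ℝ) + 1) /
            ((T : ℝ) - (k : ℝ) + 1)) 0

/-!
With `m = ⌊T(1 - 1/e)⌋` and `N = T - m`, buyer 2's value for her `(T - k + 1)`-th item is
`(k - N)⁺ / k`, so the greedy payoff of buyer 1 for `k` items is `k - (k - N)⁺ = min k N`: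
she demands exactly `N` items. Buyer 2's values are below `1`, so `OPT = T`, while the greedy
allocation yields `T - N (H_T - H_N)`. Since `N / T → 1/e`, the harmonic block `H_T - H_N`
tends to `log (T / N) → 1`, and the efficiency tends to `1 - 1/e`.
-/

open Filter Topology

lemma sum_Icc_one_reflect {M : Type*} [AddCommMonoid M] (f : ℕ → M) {m T : ℕ} (h : m ≤ T) :
    ∑ i ∈ Icc 1 m, f (T + 1 - i) = ∑ n ∈ Ioc (T - m) T, f n := by
  refine sum_nbij' (fun i => T + 1 - i) (fun n => T + 1 - n) ?_ ?_ ?_ ?_ (fun _ _ => rfl) <;>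
    intro i hi <;> simp only [mem_Icc, mem_Ioc] at hi ⊢ <;> omega

lemma sum_Ioc_inv_eq_harmonic_sub {a b : ℕ} (h : a ≤ b) :
    ∑ n ∈ Ioc a b, (n : ℝ)⁻¹ = harmonic b - harmonic a := by
  induction b, h using Nat.le_induction with
  | base => simp
  | succ b hab ih =>
    rw [sum_Ioc_succ_top (by omega), ih, harmonic_succ]
    push_cast
    ring

/-- Both `harmonic (b x) - log (b x)` and `harmonic (a x) - log (a x)` tend to `γ`. -/
lemma tendsto_sum_Ioc_inv {ι : Type*} {l : Filter ι} {a b : ι → ℕ} {c : ℝ} (hc : 0 < c)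
    (hab : ∀ᶠ x in l, a x ≤ b x) (hb : Tendsto b l atTop)
    (hratio : Tendsto (fun x => (a x : ℝ) / b x) l (𝓝 c)) :
    Tendsto (fun x => ∑ n ∈ Ioc (a x) (b x), (n : ℝ)⁻¹) l (𝓝 (-Real.log c)) := by
  have hb' : Tendsto (fun x => (b x : ℝ)) l atTop := tendsto_natCast_atTop_iff.mpr hb
  have ha' : Tendsto (fun x => (a x : ℝ)) l atTop := by
    refine (hratio.pos_mul_atTop hc hb').congr' ?_
    filter_upwards [hb'.eventually_gt_atTop 0] with x hx
    exact div_mul_cancel₀ _ hx.ne'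
  have ha : Tendsto a l atTop := tendsto_natCast_atTop_iff.mp ha'
  have hlim := ((Real.tendsto_harmonic_sub_log.comp hb).sub
    (Real.tendsto_harmonic_sub_log.comp ha)).sub
    ((Real.continuousAt_log hc.ne').tendsto.comp hratio)
  rw [sub_self, zero_sub] at hlim
  refine hlim.congr' ?_
  filter_upwards [hab, ha'.eventually_gt_atTop 0, hb'.eventually_gt_atTop 0] with x hx ha0 hb0
  simp only [Function.comp_apply, sum_Ioc_inv_eq_harmonic_sub hx,
    Real.log_div ha0.ne' hb0.ne']
  ring

lemma tendsto_sub_floor_mul_div {a : ℝ} (ha0 : 0 ≤ a) (ha1 : a ≤ 1) :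
    Tendsto (fun T : ℕ => ((T - ⌊(T : ℝ) * a⌋₊ : ℕ) : ℝ) / T) atTop (𝓝 (1 - a)) := by
  have hfloor := (tendsto_nat_floor_mul_div_atTop ha0).comp tendsto_natCast_atTop_atTop
  refine (tendsto_const_nhds.sub hfloor).congr' ?_
  filter_upwards [eventually_gt_atTop 0] with T hT
  have hle : ⌊(T : ℝ) * a⌋₊ ≤ T :=
    Nat.floor_le_of_le (mul_le_of_le_one_right T.cast_nonneg ha1)
  have hT' : (T : ℝ) ≠ 0 := by positivity
  simp only [Function.comp_apply, Nat.cast_sub hle, mul_comm a]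
  field_simp

lemma supply_zero (T : ℕ) : supply T 0 = T := by simp [supply]

@[simp] lemma val_zero (v : Fin 2 → ℕ → ℝ) (i : Fin 2) (k : ℕ) : _root_.val v i k 0 = v i k := by
  simp [_root_.val]

lemma other_zero : other 0 = 1 := rfl

def tightProfile (T m : ℕ) : Fin 2 → ℕ → ℝ := fun i k =>
  if i = 0 then 1 else max (((m : ℝ) - k + 1) / ((T : ℝ) - k + 1)) 0

lemma vT_eq_tightProfile (T : ℕ) :
    vT T = tightProfile T ⌊(T : ℝ) * (1 - 1 / Real.exp 1)⌋₊ := rfl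

section TightProfile

variable {T m k : ℕ}

@[simp] lemma tightProfile_zero : tightProfile T m 0 k = 1 := rfl

lemma tightProfile_one :
    tightProfile T m 1 k = max (((m : ℝ) - k + 1) / ((T : ℝ) - k + 1)) 0 := rfl

lemma tightProfile_nonneg (i : Fin 2) : 0 ≤ tightProfile T m i k := by
  fin_cases i
  · simp
  · exact le_max_right _ _

lemma tightProfile_succ_le (hm : m ≤ T) (hk : k + 1 ≤ T) (i : Fin 2) :
    tightProfile T m i (k + 1) ≤ tightProfile T m i k := by
  fin_cases i
  · simp
  · simp only [Fin.mk_one, tightProfile_one]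
    gcongr ?_ ⊔ _
    have hkT : (k : ℝ) + 1 ≤ T := by exact_mod_cast hk
    have hmT : (m : ℝ) ≤ T := by exact_mod_cast hm
    rw [div_le_div_iff₀ (by push_cast; linarith) (by linarith)]
    push_cast
    nlinarith

lemma tightProfile_one_lt_one (hm : m < T) (hk : k ≤ T) : tightProfile T m 1 k < 1 := by
  have hkT : (k : ℝ) ≤ T := by exact_mod_cast hk
  have hmT : (m : ℝ) < T := by exact_mod_cast hm
  exact max_lt ((div_lt_one (by linarith)).mpr (by linarith)) one_pos

lemma tightProfile_one_of_le (hm : m ≤ T) (hk : k ≤ m) :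
    tightProfile T m 1 k = 1 - ((T - m : ℕ) : ℝ) * ((T + 1 - k : ℕ) : ℝ)⁻¹ := by
  have hkm : (k : ℝ) ≤ m := by exact_mod_cast hk
  have hmT : (m : ℝ) ≤ T := by exact_mod_cast hm
  rw [tightProfile_one, max_eq_left (div_nonneg (by linarith) (by linarith)),
    Nat.cast_sub hm, Nat.cast_sub (by omega), Nat.cast_succ, eq_sub_iff_add_eq, ← div_eq_mul_inv,
    show (T : ℝ) + 1 - k = T - k + 1 by ring, ← add_div, div_eq_one_iff_eq (by linarith)]
  ring

lemma gbar_tightProfile (hm : m ≤ T) (hk : k ≤ T) :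
    gbar T (tightProfile T m) 0 k 0 = ((min k (T - m) : ℕ) : ℝ) := by
  have hsum : ∑ j ∈ Icc 1 k, _root_.val (tightProfile T m) 0 j 0 = k := by simp
  rw [gbar, hsum, other_zero, supply_zero, val_zero, tightProfile_one, Nat.cast_min,
    Nat.cast_sub hm]
  rcases Nat.eq_zero_or_pos k with rfl | hk0
  · simp [hm]
  · have hkpos : (0 : ℝ) < k := by exact_mod_cast hk0
    push_cast [Nat.cast_sub hk]
    rw [mul_max_of_nonneg _ _ hkpos.le, mul_zero,
      show (T : ℝ) - (T - k + 1) + 1 = k by ring, mul_div_cancel₀ _ hkpos.ne']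
    rcases le_total (k : ℝ) (T - m) with h | h
    · rw [max_eq_right (by linarith), min_eq_left h, sub_zero]
    · rw [max_eq_left (by linarith), min_eq_right h]
      ring

lemma gu_tightProfile (hm : m ≤ T) : gu T (tightProfile T m) 0 0 = ((T - m : ℕ) : ℝ) := by
  refine le_antisymm (sup'_le _ _ fun k hk => ?_) ?_
  · rw [supply_zero, mem_range] at hk
    rw [gbar_tightProfile hm (by omega)]
    exact_mod_cast min_le_right _ _
  · refine le_trans ?_ (le_sup' _ (by rw [supply_zero, mem_range]; omega : T - m ∈ _))
    rw [gbar_tightProfile hm (by omega), min_self]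

lemma gd_tightProfile (hm : m ≤ T) : gd T (tightProfile T m) 0 0 = T - m := by
  have hset : {k | k ≤ supply T 0 ∧ gbar T (tightProfile T m) 0 k 0 = gu T (tightProfile T m) 0 0}
      = Set.Icc (T - m) T := by
    ext k
    simp only [Set.mem_ofPred_eq, Set.mem_Icc, supply_zero, gu_tightProfile hm]
    constructor
    · rintro ⟨hk, heq⟩
      rw [gbar_tightProfile hm hk, Nat.cast_inj, min_eq_right_iff] at heq
      exact ⟨heq, hk⟩
    · rintro ⟨hmk, hk⟩
      rw [gbar_tightProfile hm hk, min_eq_right hmk]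
      exact ⟨hk, rfl⟩
  rw [gd, hset, csInf_Icc (by omega)]

lemma df_tightProfile (hm : m < T) : df T (tightProfile T m) 0 0 = T := by
  refine IsGreatest.csSup_eq ⟨⟨by omega, (supply_zero T).ge, ?_⟩, fun k hk => ?_⟩
  · rw [other_zero, supply_zero, val_zero, val_zero, tightProfile_zero]
    exact tightProfile_one_lt_one hm (by omega)
  · exact hk.2.1.trans (supply_zero T).le

lemma opt_tightProfile (hm : m < T) : opt T (tightProfile T m) 0 = T := by
  refine le_antisymm (sup'_le _ _ fun k hk => ?_) ?_
  · rw [supply_zero, mem_range] at hk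
    have hrest : ∑ i ∈ Icc 1 (T - k), tightProfile T m 1 i ≤ ((T - k : ℕ) : ℝ) :=
      calc ∑ i ∈ Icc 1 (T - k), tightProfile T m 1 i
          ≤ ∑ _i ∈ Icc 1 (T - k), (1 : ℝ) :=
            sum_le_sum fun i hi =>
              (tightProfile_one_lt_one hm (by rw [mem_Icc] at hi; omega)).le
        _ = ((T - k : ℕ) : ℝ) := by simp
    rw [sw, supply_zero]
    simp only [val_zero, tightProfile_zero, sum_const, Nat.card_Icc, add_tsub_cancel_right,
      nsmul_eq_mul, mul_one] at hrest ⊢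
    rw [Nat.cast_sub (by omega)] at hrest
    linarith
  · refine le_trans ?_ (le_sup' _ (by rw [supply_zero, mem_range]; omega : T ∈ _))
    simp [sw, supply_zero]

lemma sw_tightProfile (hm : m ≤ T) :
    sw T (tightProfile T m) (T - m) 0 = T - ((T - m : ℕ) : ℝ) * ∑ n ∈ Ioc (T - m) T, (n : ℝ)⁻¹ := by
  have hterm : ∀ i ∈ Icc 1 m, _root_.val (tightProfile T m) 1 i 0
      = 1 - ((T - m : ℕ) : ℝ) * ((T + 1 - i : ℕ) : ℝ)⁻¹ := fun i hi => by
    rw [val_zero, tightProfile_one_of_le hm (mem_Icc.mp hi).2]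
  rw [sw, supply_zero, Nat.sub_sub_self hm, sum_congr rfl hterm, sum_sub_distrib, ← mul_sum,
    sum_Icc_one_reflect (fun n => (n : ℝ)⁻¹) hm]
  simp only [val_zero, tightProfile_zero, sum_const, Nat.card_Icc, add_tsub_cancel_right,
    nsmul_eq_mul, mul_one, Nat.cast_sub hm]
  ring

end TightProfile

/-- Tightness of the `1 - 1/e` price of anarchy bound. -/
theorem stmt19 :
    (∀ T : ℕ, 1 ≤ T →
      (∀ i : Fin 2, ∀ k : ℕ, 1 ≤ k → k ≤ T → 0 ≤ vT T i k) ∧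
      (∀ i : Fin 2, ∀ k : ℕ, 1 ≤ k → k + 1 ≤ T → vT T i (k + 1) ≤ vT T i k) ∧
      df T (vT T) 0 (0 : Fin 2 → ℕ) = T ∧
      gd T (vT T) 0 (0 : Fin 2 → ℕ) = T - ⌊(T : ℝ) * (1 - 1 / Real.exp 1)⌋₊ ∧
      opt T (vT T) (0 : Fin 2 → ℕ) = (T : ℝ)) ∧
    Filter.Tendsto
      (fun T : ℕ => sw T (vT T) (gd T (vT T) 0 (0 : Fin 2 → ℕ)) (0 : Fin 2 → ℕ) / (T : ℝ))
      Filter.atTop (nhds (1 - 1 / Real.exp 1)) := by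
  have he : 0 < 1 / Real.exp 1 := by positivity
  have he' : 1 / Real.exp 1 < 1 :=
    (div_lt_one (Real.exp_pos 1)).mpr (Real.one_lt_exp_iff.mpr one_pos)
  have hfloor (T : ℕ) (hT : 1 ≤ T) : ⌊(T : ℝ) * (1 - 1 / Real.exp 1)⌋₊ < T :=
    (Nat.floor_lt (by positivity)).mpr <| mul_lt_of_lt_one_right (by positivity) (by linarith)
  refine ⟨fun T hT => ?_, ?_⟩
  · rw [vT_eq_tightProfile]
    exact ⟨fun i _ _ _ => tightProfile_nonneg i,
      fun i k _ hk => tightProfile_succ_le (hfloor T hT).le hk i, df_tightProfile (hfloor T hT),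
      gd_tightProfile (hfloor T hT).le, opt_tightProfile (hfloor T hT)⟩
  · have hratio := tendsto_sub_floor_mul_div (by linarith) (by linarith : 1 - 1 / Real.exp 1 ≤ 1)
    rw [sub_sub_cancel] at hratio
    have hblock := tendsto_sum_Ioc_inv he (Eventually.of_forall fun T => Nat.sub_le _ _)
      (b := fun T => T) tendsto_id hratio
    rw [show -Real.log (1 / Real.exp 1) = 1 by simp] at hblock
    have hlim := (tendsto_const_nhds (x := (1 : ℝ))).sub (hratio.mul hblock)
    rw [mul_one] at hlim
    refine hlim.congr' ?_
    filter_upwards [eventually_ge_atTop 1] with T hT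
    rw [vT_eq_tightProfile, gd_tightProfile (hfloor T hT).le, sw_tightProfile (hfloor T hT).le]
    field_simp
end
end
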